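/- Let a, b ∈ [0,1]. Define f(a,b) = (1-a)(1-b) + a(1-a)(1-b)^2 + a^2(1-a)(1-b)^3. Then f is nonincreasing in a: if 0 ≤ a ≤ a' ≤ 1 then f(a',b) ≤ f(a,b). -/

import Mathlib

noncomputable def f (a b : ℝ) : ℝ :=
  (1 - a) * (1 - b) + a * (1 - a) * (1 - b)^2 + a^2 * (1 - a) * (1 - b)^3

/-
With `t = 1 - b`, `f a b = t (1 - a) (1 + a t + a² t²)`, and the difference quotient of
`a ↦ (1 - a) (1 + a t + a² t²)` splits into three terms, each nonnegative as soon as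
`0 ≤ a ≤ a'` and `t ∈ [0, 1]`.
-/

theorem f_sub_f (a a' b : ℝ) :
    f a b - f a' b = (1 - b) * (a' - a) *
      (b + b * (1 - b) * (a + a') + (1 - b) ^ 2 * (a ^ 2 + a * a' + a' ^ 2)) := by
  unfold f
  ring

theorem f_antitoneOn {b : ℝ} (hb0 : 0 ≤ b) (hb1 : b ≤ 1) :
    AntitoneOn (fun a => f a b) (Set.Ici 0) := by
  intro a (ha : 0 ≤ a) a' (ha' : 0 ≤ a') haa
  have ht : 0 ≤ 1 - b := sub_nonneg.mpr hb1
  rw [← sub_nonneg, f_sub_f]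
  exact mul_nonneg (mul_nonneg ht (sub_nonneg.mpr haa)) (by positivity)

theorem stmt_11_general (a a' b : ℝ) (hb0 : 0 ≤ b) (hb1 : b ≤ 1)
    (ha0 : 0 ≤ a) (haa : a ≤ a') :
    f a' b ≤ f a b :=
  f_antitoneOn hb0 hb1 ha0 (ha0.trans haa) haa

theorem stmt_11 (a a' b : ℝ) (hb0 : 0 ≤ b) (hb1 : b ≤ 1)
    (ha0 : 0 ≤ a) (haa : a ≤ a') (ha1 : a' ≤ 1) :
    f a' b ≤ f a b :=
  stmt_11_general a a' b hb0 hb1 ha0 haa
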